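/- arXiv:0708.4045 — 2 statements merged into one kernel-verified Lean document; each statement's English description precedes it below -/
import Mathlib

section
/- Let A ⊆ B be a unital inclusion of C*-algebras with a faithful conditional expectation E : B → A of index-finite type, let B_2 be the basic construction with dual conditional expectation E_2 : B_2 → B, and let {(v_k, v_k*)}_{k=1}^n ⊆ (A′ ∩ B_2) × (A′ ∩ B_2) be a quasi-basis for E_2. Then for every projection p ∈ A, the restriction F of E_2 to the corner pB_2p is a faithful conditional expectation from pB_2p onto pBp, and {(pv_k, pv_k*)}_{k=1}^n is a quasi-basis for F. -/
open scoped BigOperators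

/-- An element of a `*`-algebra is a projection if it is self-adjoint and idempotent. -/
def IsProjection {A : Type*} [Mul A] [Star A] (p : A) : Prop :=
  star p = p ∧ p * p = p

/-- The topological stable rank of the subalgebra (or corner) of an ambient topological
algebra `A` given by the subset `S`, whose unit is `e`. -/
noncomputable def relTSR {A : Type*} [Ring A] [TopologicalSpace A] (S : Set A) (e : A) : ℕ∞ :=
  sInf ((Nat.cast : ℕ → ℕ∞) ''
    {n : ℕ | 0 < n ∧
      Dense {a : Fin n → S | ∃ b : Fin n → S, (∑ i, (b i : A) * (a i : A)) = e}})

/-- The corner `pSp` of the subalgebra `S`, cut by the projection `p`. -/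
def cornerIn {A : Type*} [Mul A] (S : Set A) (p : A) : Set A := {x ∈ S | p * x * p = x}

/-- `S` is a unital C*-subalgebra of `A` (with the same unit). -/
structure IsUnitalCStarSubalgebra {A : Type*} [CStarAlgebra A] (S : Set A) : Prop where
  isClosed : IsClosed S
  one_mem : (1 : A) ∈ S
  add_mem : ∀ {x y : A}, x ∈ S → y ∈ S → x + y ∈ S
  smul_mem : ∀ (c : ℂ) {x : A}, x ∈ S → c • x ∈ S
  mul_mem : ∀ {x y : A}, x ∈ S → y ∈ S → x * y ∈ S
  star_mem : ∀ {x : A}, x ∈ S → star x ∈ S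

/-- The restriction of `E` to the subalgebra `S` is a faithful conditional expectation
from `S` onto the subalgebra `SA ⊆ S`. -/
structure IsCondExpOn {T : Type*} [CStarAlgebra T] (S SA : Set T) (E : T → T) : Prop where
  map_add : ∀ x ∈ S, ∀ y ∈ S, E (x + y) = E x + E y
  map_smul : ∀ (c : ℂ), ∀ x ∈ S, E (c • x) = c • E x
  mem : ∀ x ∈ S, E x ∈ SA
  fixes : ∀ a ∈ SA, E a = a
  bimodule : ∀ a ∈ SA, ∀ b ∈ SA, ∀ x ∈ S, E (a * x * b) = a * E x * b
  map_star : ∀ x ∈ S, E (star x) = star (E x)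
  positive : ∀ x ∈ S, ∃ y ∈ SA, E (star x * x) = star y * y
  faithful : ∀ x ∈ S, E (star x * x) = 0 → x = 0

/-- `u` is a quasi-basis for the conditional expectation `E` on the subalgebra `S`,
witnessing that `E` is of index-finite type. -/
def IsQuasiBasisOn {T : Type*} [CStarAlgebra T] (S : Set T) (E : T → T)
    {m : ℕ} (u : Fin m → T) : Prop :=
  (∀ i, u i ∈ S) ∧
    ∀ x ∈ S, (x = ∑ i, u i * E (star (u i) * x)) ∧ (x = ∑ i, E (x * u i) * star (u i))

/-- The set of finite sums `∑ xᵢ * e * yᵢ` with `xᵢ, yᵢ ∈ S`. -/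
def eSpan {T : Type*} [Ring T] (S : Set T) (e : T) : Set T :=
  {z | ∃ (m : ℕ) (x y : Fin m → T),
    (∀ i, x i ∈ S) ∧ (∀ i, y i ∈ S) ∧ z = ∑ i, x i * e * y i}

/-- The relative commutant `SA' ∩ S`. -/
def relCommutant {T : Type*} [Mul T] (SA S : Set T) : Set T :=
  {x ∈ S | ∀ a ∈ SA, a * x = x * a}

/-- `SB2` together with the Jones projection `e` is the C* basic construction of the
inclusion `SA ⊆ SB` with respect to the conditional expectation `E : SB → SA`
(of index-finite type), all inside a common ambient C*-algebra. -/
structure IsBasicConstruction {T : Type*} [CStarAlgebra T]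
    (SA SB SB2 : Set T) (E : T → T) (e : T) : Prop where
  proj : IsProjection e
  mem : e ∈ SB2
  commutes : ∀ a ∈ SA, a * e = e * a
  expectation : ∀ b ∈ SB, e * b * e = E b * e
  inj : ∀ b ∈ SB, b * e = 0 → b = 0
  span : SB2 = eSpan SB e

/-- `E2` is the dual conditional expectation of `E` on the basic construction
`SB2 = SB e SB`, determined by `E2 (x * e * y) = (Index E)⁻¹ * (x * y)`, where
`Index E = ∑ uᵢ * uᵢ*` for a quasi-basis `u` of `E`. -/
structure IsDualCondExp {T : Type*} [CStarAlgebra T] (SB SB2 : Set T)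
    (E E2 : T → T) (e : T) {m : ℕ} (u : Fin m → T) : Prop where
  condExp : IsCondExpOn SB2 SB E2
  index_formula : ∃ w : T,
    ((∑ i, u i * star (u i)) * w = 1 ∧ w * (∑ i, u i * star (u i)) = 1) ∧
    ∀ x ∈ SB, ∀ y ∈ SB, E2 (x * e * y) = w * (x * y)

/-!
The corner `p B₂ p` is preserved by `E₂` because `p ∈ B` can be pulled out of `E₂` on both
sides, so every axiom of a conditional expectation restricts. The only point needing an
argument is positivity: `E₂ (x* x) = y* y` with `y ∈ B` only, and a factor in the corner
`p B p` is the square root of `E₂ (x* x)`, which stays in the closed `*`-subalgebra `p B p`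
by continuous functional calculus. Since `p` commutes with the `vₖ`, multiplying the
quasi-basis expansions `x = ∑ vₖ E₂ (vₖ* x) = ∑ E₂ (x vₖ) vₖ*` by `p` gives those for `p vₖ`.
-/

namespace IsProjection

variable {A : Type*} [Semigroup A] [StarMul A] {p x y : A}

theorem mul_eq_of_corner (hp : IsProjection p) (hx : p * x * p = x) : p * x = x := by
  rw [← hx, ← mul_assoc, ← mul_assoc, hp.2]

theorem eq_mul_of_corner (hp : IsProjection p) (hx : p * x * p = x) : x * p = x := by
  rw [← hx, mul_assoc, hp.2]

theorem star_corner (hp : IsProjection p) (hx : p * x * p = x) :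
    p * star x * p = star x := by
  rw [← hp.1, ← star_mul, ← star_mul, ← mul_assoc, hx]

theorem mul_corner (hp : IsProjection p) (hx : p * x * p = x) (hy : p * y * p = y) :
    p * (x * y) * p = x * y := by
  rw [← mul_assoc, hp.mul_eq_of_corner hx, mul_assoc, hp.eq_mul_of_corner hy]

end IsProjection

namespace IsUnitalCStarSubalgebra

variable {T : Type*} [CStarAlgebra T] {S : Set T} {p : T}

theorem isClosed_cornerIn (hS : IsUnitalCStarSubalgebra S) : IsClosed (cornerIn S p) :=
  hS.isClosed.inter <| isClosed_eq (by fun_prop) continuous_id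

theorem zero_mem (hS : IsUnitalCStarSubalgebra S) : (0 : T) ∈ S := by
  simpa using hS.smul_mem 0 hS.one_mem

-- Non-unital: its unit `p` need not lie in `S`.
def corner (hS : IsUnitalCStarSubalgebra S) (hp : IsProjection p) :
    NonUnitalStarSubalgebra ℂ T where
  carrier := cornerIn S p
  zero_mem' := ⟨hS.zero_mem, by simp⟩
  add_mem' := fun ⟨hx, hpx⟩ ⟨hy, hpy⟩ => ⟨hS.add_mem hx hy, by rw [mul_add, add_mul, hpx, hpy]⟩
  mul_mem' := fun ⟨hx, hpx⟩ ⟨hy, hpy⟩ => ⟨hS.mul_mem hx hy, hp.mul_corner hpx hpy⟩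
  smul_mem' := fun c _ ⟨hx, hpx⟩ => ⟨hS.smul_mem c hx, by rw [mul_smul_comm, smul_mul_assoc, hpx]⟩
  star_mem' := fun ⟨hx, hpx⟩ => ⟨hS.star_mem hx, hp.star_corner hpx⟩

end IsUnitalCStarSubalgebra

theorem NonUnitalStarSubalgebra.exists_mem_star_mul_self_eq {T : Type*} [CStarAlgebra T]
    (S : NonUnitalStarSubalgebra ℂ T) (hS : IsClosed (S : Set T)) (y : T) (hy : star y * y ∈ S) :
    ∃ w ∈ S, star y * y = star w * w := by
  let : PartialOrder T := CStarAlgebra.spectralOrder T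
  let : StarOrderedRing T := CStarAlgebra.spectralOrderedRing T
  have hnonneg : 0 ≤ star y * y := star_mul_self_nonneg y
  refine ⟨CFC.sqrt (star y * y), ?_, ?_⟩
  · rw [CFC.sqrt_eq_real_sqrt _ hnonneg]
    exact cfcₙ_mem (𝕜 := ℝ) (𝕜' := ℂ) (hs := hS) _ hy
  · rw [(CFC.sqrt_nonneg (star y * y)).isSelfAdjoint.star_eq, CFC.sqrt_mul_sqrt_self _ hnonneg]

section Corner

variable {T : Type*} [CStarAlgebra T] {S SB : Set T} {E : T → T} {p : T}

theorem IsCondExpOn.corner (hE : IsCondExpOn S SB E) (hSB : IsUnitalCStarSubalgebra SB)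
    (hS : ∀ x ∈ S, star x * x ∈ S) (hp : IsProjection p) (hpSB : p ∈ SB) :
    IsCondExpOn (cornerIn S p) (cornerIn SB p) E := by
  have mem_corner : ∀ x ∈ S, p * x * p = x → E x ∈ cornerIn SB p := fun x hx hpx =>
    ⟨hE.mem x hx, by rw [← hE.bimodule p hpSB p hpSB x hx, hpx]⟩
  refine ⟨fun x hx y hy => hE.map_add x hx.1 y hy.1, fun c x hx => hE.map_smul c x hx.1,
    fun x hx => mem_corner x hx.1 hx.2, fun a ha => hE.fixes a ha.1,
    fun a ha b hb x hx => hE.bimodule a ha.1 b hb.1 x hx.1, fun x hx => hE.map_star x hx.1,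
    fun x hx => ?_, fun x hx => hE.faithful x hx.1⟩
  obtain ⟨y, -, hy⟩ := hE.positive x hx.1
  have hxx : E (star x * x) ∈ cornerIn SB p :=
    mem_corner _ (hS x hx.1) (hp.mul_corner (hp.star_corner hx.2) hx.2)
  rw [hy] at hxx ⊢
  exact (hSB.corner hp).exists_mem_star_mul_self_eq hSB.isClosed_cornerIn y hxx

theorem IsQuasiBasisOn.corner {n : ℕ} {v : Fin n → T} (hv : IsQuasiBasisOn S E v)
    (hp : IsProjection p) (hpv : ∀ k, p * v k ∈ S) (hcomm : ∀ k, p * v k = v k * p) :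
    IsQuasiBasisOn (cornerIn S p) E (fun k => p * v k) := by
  refine ⟨fun k => ⟨hpv k, ?_⟩, fun x hx => ⟨?_, ?_⟩⟩
  · show p * (p * v k) * p = p * v k
    rw [← mul_assoc, hp.2, hcomm, mul_assoc, hp.2]
  · calc x = p * x := (hp.mul_eq_of_corner hx.2).symm
      _ = p * ∑ k, v k * E (star (v k) * x) := by rw [← (hv.2 x hx.1).1]
      _ = ∑ k, p * v k * E (star (p * v k) * x) := by
        simp only [Finset.mul_sum, star_mul, hp.1, mul_assoc, hp.mul_eq_of_corner hx.2]
  · calc x = x * p := (hp.eq_mul_of_corner hx.2).symm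
      _ = (∑ k, E (x * v k) * star (v k)) * p := by rw [← (hv.2 x hx.1).2]
      _ = ∑ k, E (x * (p * v k)) * star (p * v k) := by
        simp only [Finset.sum_mul, star_mul, hp.1, ← mul_assoc, hp.eq_mul_of_corner hx.2]

end Corner

theorem restriction_of_dual_condExp_to_corner_general
    {T : Type*} [CStarAlgebra T] (SA SB : Set T)
    (hSB : IsUnitalCStarSubalgebra SB)
    (hAB : SA ⊆ SB)
    (E : T → T)
    {m : ℕ} (u : Fin m → T)
    (e₁ : T)
    (E₂ : T → T) (hdual : IsDualCondExp SB Set.univ E E₂ e₁ u)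
    {n : ℕ} (v : Fin n → T) (hv : IsQuasiBasisOn Set.univ E₂ v)
    (hv' : ∀ k, v k ∈ relCommutant SA Set.univ) :
    ∀ p ∈ SA, IsProjection p →
      IsCondExpOn (cornerIn Set.univ p) (cornerIn SB p) E₂ ∧
      IsQuasiBasisOn (cornerIn Set.univ p) E₂ (fun k => p * v k) := by
  intro p hp hproj
  exact ⟨hdual.condExp.corner hSB (fun _ _ => trivial) hproj (hAB hp),
    hv.corner hproj (fun _ => trivial) (fun k => (hv' k).2 p hp)⟩

/-- Let `SA ⊆ SB` be a unital inclusion of C*-subalgebras of the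
C*-algebra `T` (playing the role of the basic construction `B₂`), with a faithful
conditional expectation `E : SB → SA` of index-finite type, Jones projection `e₁` and
dual conditional expectation `E₂ : T = B₂ → SB`, and let `v` be a quasi-basis for `E₂`
consisting of elements of the relative commutant `SA' ∩ B₂`. Then for every projection
`p ∈ SA`, the restriction of `E₂` to the corner `p B₂ p` is a faithful conditional
expectation from `p B₂ p` onto `p SB p`, and `(fun k => p * v k)` is a quasi-basis
for it. -/
theorem restriction_of_dual_condExp_to_corner
    {T : Type*} [CStarAlgebra T] (SA SB : Set T)
    (hSA : IsUnitalCStarSubalgebra SA) (hSB : IsUnitalCStarSubalgebra SB)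
    (hAB : SA ⊆ SB)
    (E : T → T) (hE : IsCondExpOn SB SA E)
    {m : ℕ} (u : Fin m → T) (hu : IsQuasiBasisOn SB E u)
    (e₁ : T) (hbasic : IsBasicConstruction SA SB Set.univ E e₁)
    (E₂ : T → T) (hdual : IsDualCondExp SB Set.univ E E₂ e₁ u)
    {n : ℕ} (v : Fin n → T) (hv : IsQuasiBasisOn Set.univ E₂ v)
    (hv' : ∀ k, v k ∈ relCommutant SA Set.univ) :
    ∀ p ∈ SA, IsProjection p →
      IsCondExpOn (cornerIn Set.univ p) (cornerIn SB p) E₂ ∧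
      IsQuasiBasisOn (cornerIn Set.univ p) E₂ (fun k => p * v k) :=
  restriction_of_dual_condExp_to_corner_general SA SB hSB hAB E u e₁ E₂ hdual v hv hv'
end

section
/- Let A be a unital C*-algebra with tsr(A) ≥ 2n for some positive integer n. Then for any action α of Z/2Z on A (i.e., any symmetry), tsr(A ⋊_α Z/2Z) ≥ n. -/
open scoped BigOperators

/-- The topological stable rank of a unital topological algebra. -/
noncomputable def tsr (A : Type*) [Ring A] [TopologicalSpace A] : ℕ∞ :=
  sInf ((Nat.cast : ℕ → ℕ∞) ''
    {n : ℕ | 0 < n ∧ Dense {a : Fin n → A | ∃ b : Fin n → A, (∑ i, b i * a i) = 1}})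

/-- `α` is an action of the group `G` by `*`-automorphisms on the C*-algebra `A`. -/
structure IsCStarAction (G : Type*) [Group G] (A : Type*) [CStarAlgebra A]
    (α : G → A → A) : Prop where
  map_add : ∀ g x y, α g (x + y) = α g x + α g y
  map_mul : ∀ g x y, α g (x * y) = α g x * α g y
  map_smul : ∀ g (c : ℂ) x, α g (c • x) = c • α g x
  map_star : ∀ g x, α g (star x) = star (α g x)
  map_one : ∀ g, α g 1 = 1
  one_apply : ∀ x, α 1 x = x
  mul_apply : ∀ g h x, α (g * h) x = α g (α h x)

/-- `B` is (a copy of) the crossed product `A ⋊_α G` of the unital C*-algebra `A` by an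
action `α` of the finite group `G`: it contains `A` via the unital `*`-embedding `ι`,
contains implementing unitaries `u g`, and equals `⊕_g ι(A) (u g)` (existence and
uniqueness of coefficients).  For a finite group this characterizes the (full = reduced)
crossed product uniquely. -/
structure CrossedProductStructure (G : Type*) [Group G] [Fintype G]
    (A B : Type*) [CStarAlgebra A] [CStarAlgebra B] (α : G → A → A) where
  ι : A → B
  u : G → B
  ι_add : ∀ x y, ι (x + y) = ι x + ι y
  ι_mul : ∀ x y, ι (x * y) = ι x * ι y
  ι_smul : ∀ (c : ℂ) (x : A), ι (c • x) = c • ι x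
  ι_star : ∀ x, ι (star x) = star (ι x)
  ι_one : ι 1 = 1
  ι_injective : Function.Injective ι
  u_one : u 1 = 1
  u_mul : ∀ g h, u g * u h = u (g * h)
  u_star : ∀ g, star (u g) = u g⁻¹
  covariant : ∀ g a, u g * ι a = ι (α g a) * u g
  repr_exists_unique : ∀ b : B, ∃! c : G → A, b = ∑ g, ι (c g) * u g

/-- `I` is a closed two-sided ideal of the C*-subalgebra `S`. -/
def IsClosedIdealIn {A : Type*} [CStarAlgebra A] (S I : Set A) : Prop :=
  I ⊆ S ∧ IsClosed I ∧ (0 : A) ∈ I ∧ (∀ x ∈ I, ∀ y ∈ I, x + y ∈ I) ∧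
    (∀ (c : ℂ), ∀ x ∈ I, c • x ∈ I) ∧ (∀ s ∈ S, ∀ x ∈ I, s * x ∈ I ∧ x * s ∈ I)

/-- The C*-subalgebra `S` is simple. -/
def IsSimpleIn {A : Type*} [CStarAlgebra A] (S : Set A) : Prop :=
  (∃ x ∈ S, x ≠ 0) ∧ ∀ I : Set A, IsClosedIdealIn S I → I = {0} ∨ I = S

/-- `H` is a hereditary C*-subalgebra of the C*-subalgebra `S`. -/
def IsHereditarySubalgebraIn {A : Type*} [CStarAlgebra A] [PartialOrder A]
    [StarOrderedRing A] (S H : Set A) : Prop :=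
  H ⊆ S ∧ IsClosed H ∧ (0 : A) ∈ H ∧ (∀ x ∈ H, ∀ y ∈ H, x + y ∈ H) ∧
    (∀ (c : ℂ), ∀ x ∈ H, c • x ∈ H) ∧ (∀ x ∈ H, ∀ y ∈ H, x * y ∈ H) ∧
    (∀ x ∈ H, star x ∈ H) ∧
    (∀ x ∈ S, ∀ y ∈ H, 0 ≤ x → x ≤ y → x ∈ H)

/-- The C*-subalgebra `S` has Property (SP). -/
def HasPropertySPIn {A : Type*} [CStarAlgebra A] [PartialOrder A] [StarOrderedRing A]
    (S : Set A) : Prop :=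
  ∀ H : Set A, IsHereditarySubalgebraIn S H → H ≠ {0} →
    ∃ p ∈ H, IsProjection p ∧ p ≠ 0

/-!
Writing the elements of `A ⋊_α G` as `∑ g, ι (c g) * u g` identifies the crossed product with
`G → A` as a Banach space. If `∑ i, z i * b i = 1` in the crossed product, the coefficient of
`u 1` gives `∑ i, ∑ g, c(z i) g * α g (c(b i) g⁻¹) = 1` in `A`, so the continuous surjection
`b ↦ (α g (c(b i) g⁻¹))_(i, g)` maps `Lg_m(A ⋊_α G)` into `Lg_(m |G|)(A)` and carries density
along. Hence `tsr A ≤ |G| * tsr (A ⋊_α G)`, which for `G = ℤ/2ℤ` is the claim.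
-/

open scoped CStarAlgebra

/-- The paper's `Lg_n(A)`, indexed by an arbitrary finite type. -/
def leftUnimodular (A : Type*) [Ring A] (ι : Type*) [Fintype ι] : Set (ι → A) :=
  {a | ∃ b : ι → A, ∑ i, b i * a i = 1}

theorem tsr_le_of_dense_leftUnimodular {A : Type*} [Ring A] [TopologicalSpace A]
    {ι : Type*} [Fintype ι] [Nonempty ι] (h : Dense (leftUnimodular A ι)) :
    tsr A ≤ Fintype.card ι := by
  let e := Fintype.equivFin ι
  have hsurj : Function.Surjective fun (a : ι → A) => a ∘ e.symm :=
    fun c => ⟨c ∘ e, by ext; simp⟩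
  refine sInf_le ⟨_, ⟨Fintype.card_pos, ?_⟩, rfl⟩
  refine (hsurj.denseRange.dense_image (by fun_prop) h).mono ?_
  rintro _ ⟨a, ⟨b, hb⟩, rfl⟩
  exact ⟨b ∘ e.symm, by rwa [← e.symm.sum_comp] at hb⟩

namespace IsCStarAction

variable {G A : Type*} [Group G] [CStarAlgebra A] {α : G → A → A}

def toNonUnitalStarAlgHom (hα : IsCStarAction G A α) (g : G) : A →⋆ₙₐ[ℂ] A where
  toFun := α g
  map_smul' := hα.map_smul g
  map_zero' := by simpa using hα.map_smul g 0 0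
  map_add' := hα.map_add g
  map_mul' := hα.map_mul g
  map_star' := hα.map_star g

theorem continuous (hα : IsCStarAction G A α) (g : G) : Continuous (α g) :=
  map_continuous (hα.toNonUnitalStarAlgHom g)

theorem apply_inv_apply (hα : IsCStarAction G A α) (g : G) (x : A) : α g (α g⁻¹ x) = x := by
  rw [← hα.mul_apply, mul_inv_cancel, hα.one_apply]

end IsCStarAction

namespace CrossedProductStructure

variable {G A B : Type*} [Group G] [Fintype G] [CStarAlgebra A] [CStarAlgebra B]
  {α : G → A → A} (cp : CrossedProductStructure G A B α)

def ιHom : A →⋆ₙₐ[ℂ] B where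
  toFun := cp.ι
  map_smul' := cp.ι_smul
  map_zero' := by simpa using cp.ι_smul 0 0
  map_add' := cp.ι_add
  map_mul' := cp.ι_mul
  map_star' := cp.ι_star

theorem ι_zero : cp.ι 0 = 0 := map_zero cp.ιHom

theorem ι_sum {κ : Type*} (s : Finset κ) (f : κ → A) :
    cp.ι (∑ k ∈ s, f k) = ∑ k ∈ s, cp.ι (f k) :=
  map_sum cp.ιHom f s

def sumCoeffs : (G → A) →L[ℂ] B where
  toFun c := ∑ g, cp.ι (c g) * cp.u g
  map_add' _ _ := by simp only [Pi.add_apply, cp.ι_add, add_mul, Finset.sum_add_distrib]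
  map_smul' a c := by simp only [Pi.smul_apply, cp.ι_smul, smul_mul_assoc, Finset.smul_sum,
    RingHom.id_apply]
  cont := continuous_finsetSum _ fun g _ =>
    ((map_continuous cp.ιHom).comp (continuous_apply g)).mul continuous_const

theorem sumCoeffs_bijective : Function.Bijective cp.sumCoeffs :=
  ⟨fun _ _ h => (cp.repr_exists_unique _).unique rfl h,
   fun b => (cp.repr_exists_unique b).exists.imp fun _ h => h.symm⟩

noncomputable def coeffEquiv : (G → A) ≃L[ℂ] B :=
  .ofBijective cp.sumCoeffs (LinearMap.ker_eq_bot.mpr cp.sumCoeffs_bijective.1)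
    (LinearMap.range_eq_top.mpr cp.sumCoeffs_bijective.2)

theorem coeffEquiv_apply (c : G → A) : cp.coeffEquiv c = ∑ g, cp.ι (c g) * cp.u g := rfl

noncomputable def coeff (b : B) : G → A := cp.coeffEquiv.symm b

theorem continuous_coeff : Continuous cp.coeff := cp.coeffEquiv.symm.continuous

theorem coeffEquiv_coeff (b : B) : cp.coeffEquiv (cp.coeff b) = b :=
  cp.coeffEquiv.apply_symm_apply b

theorem coeff_coeffEquiv (c : G → A) : cp.coeff (cp.coeffEquiv c) = c :=
  cp.coeffEquiv.symm_apply_apply c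

theorem coeff_one [DecidableEq G] : cp.coeff 1 = Pi.single 1 1 := by
  rw [← cp.coeff_coeffEquiv (Pi.single 1 1), coeffEquiv_apply, Fintype.sum_eq_single 1]
  · rw [Pi.single_eq_same, cp.ι_one, cp.u_one, one_mul]
  · intro g hg
    rw [Pi.single_eq_of_ne hg, cp.ι_zero, zero_mul]

theorem ι_mul_u_mul_ι_mul_u (p x : A) (g h : G) :
    cp.ι p * cp.u g * (cp.ι x * cp.u h) = cp.ι (p * α g x) * cp.u (g * h) := by
  rw [cp.ι_mul, ← cp.u_mul, mul_assoc, ← mul_assoc (cp.u g), cp.covariant]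
  simp only [mul_assoc]

theorem coeff_mul (z b : B) (k : G) :
    cp.coeff (z * b) k = ∑ g, cp.coeff z g * α g (cp.coeff b (g⁻¹ * k)) := by
  suffices cp.coeffEquiv (fun k => ∑ g, cp.coeff z g * α g (cp.coeff b (g⁻¹ * k))) = z * b by
    rw [← this, coeff_coeffEquiv]
  conv_rhs => rw [← cp.coeffEquiv_coeff z, ← cp.coeffEquiv_coeff b]
  simp only [coeffEquiv_apply, cp.ι_sum, Finset.sum_mul]
  simp only [Finset.mul_sum, ι_mul_u_mul_ι_mul_u]
  rw [Finset.sum_comm]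
  refine Finset.sum_congr rfl fun g _ => ?_
  exact Fintype.sum_equiv (Equiv.mulLeft g⁻¹) _ _ fun k => by simp

end CrossedProductStructure

theorem CrossedProductStructure.dense_leftUnimodular {G A B : Type*} [Group G] [Fintype G]
    [CStarAlgebra A] [CStarAlgebra B] {α : G → A → A} (hα : IsCStarAction G A α)
    (cp : CrossedProductStructure G A B α) {ι : Type*} [Fintype ι]
    (h : Dense (leftUnimodular B ι)) : Dense (leftUnimodular A (ι × G)) := by
  classical
  let F : (ι → B) → (ι × G → A) := fun b ig => α ig.2 (cp.coeff (b ig.1) ig.2⁻¹)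
  have hF : Continuous F := continuous_pi fun ig => (hα.continuous _).comp
    ((continuous_apply _).comp (cp.continuous_coeff.comp (continuous_apply _)))
  have hsurj : Function.Surjective F := fun a =>
    ⟨fun i => cp.coeffEquiv fun g => α g (a (i, g⁻¹)), by
      ext ⟨i, g⟩
      simp [F, coeff_coeffEquiv, hα.apply_inv_apply]⟩
  refine (hsurj.denseRange.dense_image hF h).mono ?_
  rintro _ ⟨b, ⟨z, hz⟩, rfl⟩
  refine ⟨fun ig => cp.coeff (z ig.1) ig.2, ?_⟩
  calc ∑ ig, cp.coeff (z ig.1) ig.2 * F b ig = ∑ i, cp.coeff (z i * b i) 1 := by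
        simp [Fintype.sum_prod_type, coeff_mul, F]
    _ = cp.coeff 1 1 := by simp [← hz, coeff, map_sum]
    _ = 1 := by rw [coeff_one, Pi.single_eq_same]

theorem CrossedProductStructure.tsr_le_card_mul_tsr {G A B : Type*} [Group G] [Fintype G]
    [CStarAlgebra A] [CStarAlgebra B] {α : G → A → A} (hα : IsCStarAction G A α)
    (cp : CrossedProductStructure G A B α) : tsr A ≤ Fintype.card G * tsr B := by
  set S : Set ℕ∞ := Nat.cast '' {m : ℕ | 0 < m ∧ Dense (leftUnimodular B (Fin m))}
  have htsr : tsr B = sInf S := rfl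
  rcases S.eq_empty_or_nonempty with hS | hS
  · rw [htsr, hS, sInf_empty, ENat.mul_top (by simp)]
    exact le_top
  · obtain ⟨m, ⟨hm, hd⟩, hm_eq⟩ := csInf_mem hS
    have : Nonempty (Fin m × G) := ⟨(⟨0, hm⟩, 1)⟩
    calc tsr A ≤ Fintype.card (Fin m × G) :=
          tsr_le_of_dense_leftUnimodular (cp.dense_leftUnimodular hα hd)
      _ = Fintype.card G * tsr B := by simp [htsr, ← hm_eq, mul_comm]

theorem tsr_crossed_product_symmetry_ge_general
    {A B : Type*} [CStarAlgebra A] [CStarAlgebra B]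
    (n : ℕ) (htsr : (2 * n : ℕ∞) ≤ tsr A)
    (α : Multiplicative (ZMod 2) → A → A)
    (hα : IsCStarAction (Multiplicative (ZMod 2)) A α)
    (cp : CrossedProductStructure (Multiplicative (ZMod 2)) A B α) :
    (n : ℕ∞) ≤ tsr B := by
  have h := htsr.trans (cp.tsr_le_card_mul_tsr hα)
  rw [Fintype.card_multiplicative, ZMod.card, Nat.cast_ofNat] at h
  exact (ENat.mul_le_mul_left_iff two_ne_zero (ENat.ofNat_ne_top 2)).1 h

/-- If `A` is a unital C*-algebra with `tsr(A) ≥ 2n` (`n ≥ 1`), then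
for every action `α` of `ℤ/2ℤ` on `A` (i.e. every symmetry), the crossed product
`B = A ⋊_α ℤ/2ℤ` satisfies `tsr(B) ≥ n`. -/
theorem tsr_crossed_product_symmetry_ge
    {A B : Type*} [CStarAlgebra A] [CStarAlgebra B]
    (n : ℕ) (hn : 0 < n) (htsr : (2 * n : ℕ∞) ≤ tsr A)
    (α : Multiplicative (ZMod 2) → A → A)
    (hα : IsCStarAction (Multiplicative (ZMod 2)) A α)
    (cp : CrossedProductStructure (Multiplicative (ZMod 2)) A B α) :
    (n : ℕ∞) ≤ tsr B :=
  tsr_crossed_product_symmetry_ge_general n htsr α hα cp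
end
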